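/- Assume the sets I_1, …, I_{R−1} are initial segments I_i = [1:c_i] with α ≤ c_1 ≤ … ≤ c_{R−1} ≤ L, I_R = [1:L], and Σ_{i∈[1:R]} |I_i| = QR + L − α. Then for every s ∈ ℂ^{QR}, the absolute value of the determinant of J2(s) factorizes as |det(J2(s))| = |det(J4(s))| · Π_{i = c_{R−1}+1}^{L} |q_i^T s_R|. -/

import Mathlib

/-!
List the rows of `J2(s)` as those of `J4(s)` followed by the rows `c_{R-1}+1, …, L` of the last
block, and its columns as those of `J4(s)` followed by `a_{c_{R-1}+1}, …, a_L`. Since `a_i` is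
supported on the rows with index `i` and the rows of `J4(s)` have indices at most `c_{R-1}` in
every block, `J2(s)` becomes block lower triangular, with upper left block `J4(s)` and lower
right block `diag(q_i^T s_R)`. Reordering rows and columns only changes the sign of the
determinant.
-/

open Matrix Kronecker

noncomputable section

/-- The block-diagonal row-selection matrix `diag((I_L)_{I_1}, …, (I_L)_{I_R})` where
`I_m = [1 : sz m]` is an initial segment: row `(m, i)`, column `(m', j)` carries a `1`
iff `m = m'` and `i = j`. -/
def selBlocks (L R : ℕ) (sz : Fin R → ℕ) :
    Matrix ((m : Fin R) × Fin (sz m)) (Fin R × Fin L) ℂ :=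
  Matrix.of fun r mj => if r.1 = mj.1 ∧ (r.2 : ℕ) = (mj.2 : ℕ) then 1 else 0

/-- The vector `a_i = (I_R ⊗ diag(e_i) Q) s ∈ ℂ^{LR}`. -/
def aVec {L Q R : ℕ} (Qmat : Matrix (Fin L) (Fin Q) ℂ) (s : Fin R × Fin Q → ℂ)
    (i : Fin L) : Fin R × Fin L → ℂ :=
  ((1 : Matrix (Fin R) (Fin R) ℂ) ⊗ₖ
    (Matrix.diagonal (fun j => if j = i then (1 : ℂ) else 0) * Qmat)).mulVec s

/-- The matrix `J2(s) = P [I_R ⊗ Q | a_{α+1} | … | a_L]`, where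
`P = diag((I_L)_{I_1}, …, (I_L)_{I_R})`, `I_i = [1 : c (i-1)]` for `i ∈ [1:R−1]` and
`I_R = [1:L]`. Rows are indexed by `(m : Fin R) × Fin (if m < R-1 then c m else L)`,
columns by `(Fin R × Fin Q) ⊕ Fin (L − α)`; appended column `j` (0-based) is `a_{α+1+j}`
(1-based), i.e. `aVec` at the `Fin L`-index `α + j` (0-based). -/
def J2 (L Q R α : ℕ) (Qmat : Matrix (Fin L) (Fin Q) ℂ) (c : ℕ → ℕ)
    (s : Fin R × Fin Q → ℂ) :
    Matrix ((m : Fin R) × Fin (if (m : ℕ) < R - 1 then c (m : ℕ) else L))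
      ((Fin R × Fin Q) ⊕ Fin (L - α)) ℂ :=
  selBlocks L R (fun m => if (m : ℕ) < R - 1 then c (m : ℕ) else L) *
    Matrix.fromCols ((1 : Matrix (Fin R) (Fin R) ℂ) ⊗ₖ Qmat)
      (Matrix.of fun rj (j : Fin (L - α)) =>
        aVec Qmat s ⟨α + (j : ℕ), by have := j.2; omega⟩ rj)

/-- The matrix `J4(s) = P1 [(I_R ⊗ Q) | a_{α+1} | … | a_{c_{R−1}}]`, where
`P1 = diag((I_L)_{I_1}, …, (I_L)_{I_{R−1}}, (I_L)_{I_{R−1}})` and `I_i = [1 : c (i-1)]`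
(0-based: block `m` of `P1` has size `c (min m (R-2))`, so the last block is duplicated).
Rows are indexed by `(m : Fin R) × Fin (c (min m (R-2)))`, columns by
`(Fin R × Fin Q) ⊕ Fin (c (R-2) − α)`. -/
def J4 (L Q R α : ℕ) (Qmat : Matrix (Fin L) (Fin Q) ℂ) (c : ℕ → ℕ)
    (s : Fin R × Fin Q → ℂ) :
    Matrix ((m : Fin R) × Fin (c (min (m : ℕ) (R - 2))))
      ((Fin R × Fin Q) ⊕ Fin (c (R - 2) - α)) ℂ :=
  selBlocks L R (fun m => c (min (m : ℕ) (R - 2))) *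
    Matrix.fromCols ((1 : Matrix (Fin R) (Fin R) ℂ) ⊗ₖ Qmat)
      (Matrix.of fun rj (j : Fin (c (R - 2) - α)) =>
        if h : α + (j : ℕ) < L then aVec Qmat s ⟨α + (j : ℕ), h⟩ rj else 0)
open Matrix

theorem Matrix.norm_det_submatrix_equiv_equiv {n m R : Type*} [Fintype n] [DecidableEq n]
    [Fintype m] [DecidableEq m] [NormedCommRing R] (e₁ e₂ : n ≃ m) (A : Matrix m m R) :
    ‖(A.submatrix e₁ e₂).det‖ = ‖A.det‖ := by
  have hee : e₂ = e₁.trans (e₁.symm.trans e₂) := by ext; simp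
  rw [hee]
  change ‖((A.submatrix id (e₁.symm.trans e₂)).submatrix e₁ e₁).det‖ = ‖A.det‖
  rw [det_submatrix_equiv_self, det_permute']
  rcases Int.units_eq_one_or (Equiv.Perm.sign (e₁.symm.trans e₂)) with h | h <;> simp [h]

theorem Matrix.norm_det_submatrix_eq_of_equiv {ι κ τ τ' R : Type*} [Fintype ι] [DecidableEq ι]
    [Fintype κ] [DecidableEq κ] [Fintype τ] [DecidableEq τ] [Fintype τ'] [DecidableEq τ']
    [NormedCommRing R] (M : Matrix ι κ R) (e : τ ≃ ι) (f : τ ≃ κ) (e' : τ' ≃ ι) (f' : τ' ≃ κ) :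
    ‖(M.submatrix e f).det‖ = ‖(M.submatrix e' f').det‖ := by
  have h : M.submatrix e f
      = (M.submatrix e' f').submatrix (e.trans e'.symm) (f.trans f'.symm) := by
    ext; simp
  rw [h, norm_det_submatrix_equiv_equiv]

def sigmaFinExtendEquiv {ι : Type*} [DecidableEq ι] (a b : ι → ℕ) (r : ι)
    (hle : ∀ m, a m ≤ b m) (heq : ∀ m, m ≠ r → a m = b m) :
    (Σ m, Fin (a m)) ⊕ Fin (b r - a r) ≃ Σ m, Fin (b m) where
  toFun
    | .inl ⟨m, i⟩ => ⟨m, Fin.castLE (hle m) i⟩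
    | .inr k => ⟨r, ⟨a r + k, by omega⟩⟩
  invFun
    | ⟨m, i⟩ =>
      if h : (i : ℕ) < a m then .inl ⟨m, ⟨i, h⟩⟩
      else .inr ⟨i - a r, by
        obtain rfl : m = r := by
          by_contra hm; exact h (by rw [heq m hm]; exact i.2)
        omega⟩
  left_inv := by
    rintro (⟨m, i⟩ | k) <;> simp
  right_inv := by
    rintro ⟨m, i⟩
    by_cases h : (i : ℕ) < a m
    · simp [h]
    · obtain rfl : m = r := by
        by_contra hm; exact h (by rw [heq m hm]; exact i.2)
      simp only [h, dite_false, Sigma.mk.injEq, heq_eq_eq, true_and]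
      exact Fin.ext (by simp only; omega)

@[simp]
theorem sigmaFinExtendEquiv_inl {ι : Type*} [DecidableEq ι] (a b : ι → ℕ) (r : ι)
    (hle : ∀ m, a m ≤ b m) (heq : ∀ m, m ≠ r → a m = b m) (m : ι) (i : Fin (a m)) :
    sigmaFinExtendEquiv a b r hle heq (.inl ⟨m, i⟩) = ⟨m, Fin.castLE (hle m) i⟩ :=
  rfl

@[simp]
theorem sigmaFinExtendEquiv_inr {ι : Type*} [DecidableEq ι] (a b : ι → ℕ) (r : ι)
    (hle : ∀ m, a m ≤ b m) (heq : ∀ m, m ≠ r → a m = b m) (k : Fin (b r - a r)) :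
    sigmaFinExtendEquiv a b r hle heq (.inr k) = ⟨r, ⟨a r + k, by omega⟩⟩ :=
  rfl

def sumFinSubEquiv (κ : Type*) {a b c : ℕ} (hab : a ≤ b) (hbc : b ≤ c) :
    (κ ⊕ Fin (b - a)) ⊕ Fin (c - b) ≃ κ ⊕ Fin (c - a) :=
  (Equiv.sumAssoc _ _ _).trans
    ((Equiv.refl κ).sumCongr (finSumFinEquiv.trans (finCongr (by omega))))

@[simp]
theorem sumFinSubEquiv_inl_inl (κ : Type*) {a b c : ℕ} (hab : a ≤ b) (hbc : b ≤ c) (x : κ) :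
    sumFinSubEquiv κ hab hbc (.inl (.inl x)) = .inl x :=
  rfl

@[simp]
theorem sumFinSubEquiv_inl_inr (κ : Type*) {a b c : ℕ} (hab : a ≤ b) (hbc : b ≤ c)
    (j : Fin (b - a)) :
    sumFinSubEquiv κ hab hbc (.inl (.inr j)) = .inr ⟨j, by omega⟩ := by
  simp [sumFinSubEquiv, Fin.ext_iff]

@[simp]
theorem sumFinSubEquiv_inr (κ : Type*) {a b c : ℕ} (hab : a ≤ b) (hbc : b ≤ c)
    (k : Fin (c - b)) :
    sumFinSubEquiv κ hab hbc (.inr k) = .inr ⟨b - a + k, by omega⟩ := by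
  simp [sumFinSubEquiv, Fin.ext_iff]

theorem selBlocks_mul_apply {L R : ℕ} {sz : Fin R → ℕ} (hsz : ∀ m, sz m ≤ L)
    {κ : Type*} (M : Matrix (Fin R × Fin L) κ ℂ) (m : Fin R) (i : Fin (sz m)) (j : κ) :
    (selBlocks L R sz * M) ⟨m, i⟩ j = M (m, Fin.castLE (hsz m) i) j := by
  rw [mul_apply, Finset.sum_eq_single (m, Fin.castLE (hsz m) i)]
  · simp [selBlocks]
  · rintro ⟨m', i'⟩ - hne
    rw [selBlocks, of_apply, if_neg, zero_mul]
    rintro ⟨rfl, hi⟩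
    exact hne (by simp_all [Fin.ext_iff])
  · simp

theorem aVec_apply {L Q R : ℕ} (Qmat : Matrix (Fin L) (Fin Q) ℂ) (s : Fin R × Fin Q → ℂ)
    (i : Fin L) (m : Fin R) (j : Fin L) :
    aVec Qmat s i (m, j) = if j = i then ∑ t, Qmat j t * s (m, t) else 0 := by
  by_cases hj : j = i <;>
    simp [aVec, mulVec, dotProduct, Fintype.sum_prod_type, one_apply, diagonal_mul, hj]

section Blocks

variable {L Q R α : ℕ} {c : ℕ → ℕ}

theorem c_min_le_c_last (hmono : ∀ i j : ℕ, i ≤ j → j ≤ R - 2 → c i ≤ c j) (m : ℕ) :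
    c (min m (R - 2)) ≤ c (R - 2) :=
  hmono _ _ (min_le_right _ _) le_rfl

theorem J4_size_le (hmono : ∀ i j : ℕ, i ≤ j → j ≤ R - 2 → c i ≤ c j) (hcL : c (R - 2) ≤ L)
    (m : Fin R) : c (min (m : ℕ) (R - 2)) ≤ L :=
  (c_min_le_c_last hmono m).trans hcL

theorem J2_size_le (hmono : ∀ i j : ℕ, i ≤ j → j ≤ R - 2 → c i ≤ c j) (hcL : c (R - 2) ≤ L)
    (m : Fin R) : (if (m : ℕ) < R - 1 then c (m : ℕ) else L) ≤ L := by
  split_ifs with hm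
  · exact (hmono _ _ (by omega) le_rfl).trans hcL
  · exact le_rfl

theorem J4_size_le_J2_size (hmono : ∀ i j : ℕ, i ≤ j → j ≤ R - 2 → c i ≤ c j)
    (hcL : c (R - 2) ≤ L) (m : Fin R) :
    c (min (m : ℕ) (R - 2)) ≤ if (m : ℕ) < R - 1 then c (m : ℕ) else L := by
  split_ifs with hm
  · rw [min_eq_left (by omega)]
  · exact J4_size_le hmono hcL m

def J2RowEquiv (hR : 2 ≤ R) (hmono : ∀ i j : ℕ, i ≤ j → j ≤ R - 2 → c i ≤ c j)
    (hcL : c (R - 2) ≤ L) :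
    ((m : Fin R) × Fin (c (min (m : ℕ) (R - 2)))) ⊕ Fin (L - c (R - 2)) ≃
      ((m : Fin R) × Fin (if (m : ℕ) < R - 1 then c (m : ℕ) else L)) :=
  (Equiv.sumCongr (Equiv.refl _) (finCongr (by
      simp only [lt_irrefl, if_false, min_eq_right (by omega : R - 2 ≤ R - 1)]))).trans
    (sigmaFinExtendEquiv _ _ ⟨R - 1, by omega⟩ (J4_size_le_J2_size hmono hcL) fun m hm => by
      have hm' : (m : ℕ) < R - 1 := by
        have : (m : ℕ) ≠ R - 1 := fun h => hm (Fin.ext h)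
        omega
      rw [if_pos hm', min_eq_left (by omega)])

theorem J2_submatrix_toBlocks₁₁ (hR : 2 ≤ R) (hmono : ∀ i j : ℕ, i ≤ j → j ≤ R - 2 → c i ≤ c j)
    (hcL : c (R - 2) ≤ L) (hαc : α ≤ c (R - 2)) (Qmat : Matrix (Fin L) (Fin Q) ℂ)
    (s : Fin R × Fin Q → ℂ) :
    ((J2 L Q R α Qmat c s).submatrix (J2RowEquiv hR hmono hcL)
      (sumFinSubEquiv _ hαc hcL)).toBlocks₁₁ = J4 L Q R α Qmat c s := by
  ext ⟨m, i⟩ (p | j)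
  all_goals
    simp only [toBlocks₁₁, of_apply, submatrix_apply, J2RowEquiv, Equiv.trans_apply,
      Equiv.sumCongr_apply, Sum.map_inl, Equiv.refl_apply, sigmaFinExtendEquiv_inl,
      sumFinSubEquiv_inl_inl, sumFinSubEquiv_inl_inr, J2, J4,
      selBlocks_mul_apply (J2_size_le hmono hcL), selBlocks_mul_apply (J4_size_le hmono hcL)]
  · rfl
  · simp only [fromCols_apply_inr, of_apply]
    rw [dif_pos (by omega)]
    rfl

theorem J2_apply_inr (hmono : ∀ i j : ℕ, i ≤ j → j ≤ R - 2 → c i ≤ c j) (hcL : c (R - 2) ≤ L)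
    (Qmat : Matrix (Fin L) (Fin Q) ℂ) (s : Fin R × Fin Q → ℂ) (m : Fin R)
    (i : Fin (if (m : ℕ) < R - 1 then c (m : ℕ) else L)) (j : Fin (L - α)) :
    J2 L Q R α Qmat c s ⟨m, i⟩ (.inr j) =
      if (i : ℕ) = α + j then ∑ t, Qmat ⟨α + j, by omega⟩ t * s (m, t) else 0 := by
  rw [J2, selBlocks_mul_apply (J2_size_le hmono hcL), fromCols_apply_inr, of_apply, aVec_apply]
  by_cases h : (i : ℕ) = α + j
  · have hi : Fin.castLE (J2_size_le hmono hcL m) i = ⟨α + j, by omega⟩ := Fin.ext h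
    simp only [hi, h, if_true]
  · simp only [Fin.ext_iff, Fin.val_castLE, h, if_false]

theorem J2_submatrix_toBlocks₁₂ (hR : 2 ≤ R) (hmono : ∀ i j : ℕ, i ≤ j → j ≤ R - 2 → c i ≤ c j)
    (hcL : c (R - 2) ≤ L) (hαc : α ≤ c (R - 2)) (Qmat : Matrix (Fin L) (Fin Q) ℂ)
    (s : Fin R × Fin Q → ℂ) :
    ((J2 L Q R α Qmat c s).submatrix (J2RowEquiv hR hmono hcL)
      (sumFinSubEquiv _ hαc hcL)).toBlocks₁₂ = 0 := by
  ext ⟨m, i⟩ k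
  simp only [toBlocks₁₂, of_apply, submatrix_apply, J2RowEquiv, Equiv.trans_apply,
    Equiv.sumCongr_apply, Sum.map_inl, Equiv.refl_apply, sigmaFinExtendEquiv_inl,
    sumFinSubEquiv_inr, J2_apply_inr hmono hcL, Fin.val_castLE, Matrix.zero_apply]
  have := c_min_le_c_last hmono m
  exact if_neg (by omega)

theorem J2_submatrix_toBlocks₂₂ (hR : 2 ≤ R) (hmono : ∀ i j : ℕ, i ≤ j → j ≤ R - 2 → c i ≤ c j)
    (hcL : c (R - 2) ≤ L) (hαc : α ≤ c (R - 2)) (Qmat : Matrix (Fin L) (Fin Q) ℂ)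
    (s : Fin R × Fin Q → ℂ) :
    ((J2 L Q R α Qmat c s).submatrix (J2RowEquiv hR hmono hcL)
      (sumFinSubEquiv _ hαc hcL)).toBlocks₂₂ =
      diagonal fun k : Fin (L - c (R - 2)) =>
        ∑ t, Qmat ⟨c (R - 2) + k, by omega⟩ t * s (⟨R - 1, by omega⟩, t) := by
  have hlast : c (min (R - 1) (R - 2)) = c (R - 2) := by rw [min_eq_right (by omega)]
  ext k k'
  simp only [toBlocks₂₂, of_apply, submatrix_apply, J2RowEquiv, Equiv.trans_apply,
    Equiv.sumCongr_apply, Sum.map_inr, finCongr_apply, sigmaFinExtendEquiv_inr,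
    sumFinSubEquiv_inr, J2_apply_inr hmono hcL, Fin.val_cast, diagonal_apply, Fin.ext_iff]
  by_cases h : (k : ℕ) = k'
  · have hrow : (⟨α + (c (R - 2) - α + k'), by omega⟩ : Fin L) = ⟨c (R - 2) + k, by omega⟩ :=
      Fin.ext (by simp only; omega)
    rw [if_pos (by omega), if_pos h, hrow]
  · rw [if_neg (by omega), if_neg h]

end Blocks

theorem Matrix.det_submatrix_sumMap_fromBlocks_zero₁₂ {m m' n R : Type*} [Fintype m]
    [DecidableEq m] [Fintype n] [DecidableEq n] [CommRing R] (A : Matrix m' m R)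
    (C : Matrix n m R) (D : Matrix n n R) (e : m ≃ m') :
    ((fromBlocks A 0 C D).submatrix (Sum.map e id) id).det = (A.submatrix e id).det * D.det := by
  rw [← det_fromBlocks_zero₁₂]
  congr 1
  ext (i | i) (j | j) <;> rfl

theorem prod_filter_le_val_eq_prod_fin_sub {M : Type*} [CommMonoid M] {L c : ℕ}
    (f : Fin L → M) :
    ∏ i ∈ Finset.univ.filter (fun i : Fin L => c ≤ (i : ℕ)), f i =
      ∏ k : Fin (L - c), f ⟨c + k, by omega⟩ := by
  refine (Finset.prod_nbij (fun k : Fin (L - c) => (⟨c + k, by omega⟩ : Fin L))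
    (by simp) ?_ ?_ (fun _ _ => rfl)).symm
  · intro a _ b _ hab
    simp only [Fin.ext_iff] at hab ⊢
    omega
  · intro i hi
    simp only [Finset.coe_filter, Finset.mem_univ, true_and, Set.mem_ofPred_eq] at hi
    exact ⟨⟨i - c, by omega⟩, by simp, Fin.ext (by simp only; omega)⟩

/- `c 0, …, c (R - 2)` stand for `c_1, …, c_{R-1}`, and `Fin L` is 0-based, so the product runs
over `i ∈ [c_{R-1}+1 : L]` in the paper's indexing. -/
theorem statement6 {L Q R α : ℕ} (hR : 2 ≤ R)
    (Qmat : Matrix (Fin L) (Fin Q) ℂ) (c : ℕ → ℕ)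
    (hmono : ∀ i j : ℕ, i ≤ j → j ≤ R - 2 → c i ≤ c j)
    (hαc : α ≤ c 0) (hcL : c (R - 2) ≤ L)
    (e2 : ((Fin R × Fin Q) ⊕ Fin (L - α)) ≃
      ((m : Fin R) × Fin (if (m : ℕ) < R - 1 then c (m : ℕ) else L)))
    (e4 : ((Fin R × Fin Q) ⊕ Fin (c (R - 2) - α)) ≃
      ((m : Fin R) × Fin (c (min (m : ℕ) (R - 2))))) :
    ∀ s : Fin R × Fin Q → ℂ,
      ‖((J2 L Q R α Qmat c s).submatrix e2 id).det‖
        = ‖((J4 L Q R α Qmat c s).submatrix e4 id).det‖ *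
          ∏ i ∈ Finset.univ.filter (fun i : Fin L => c (R - 2) ≤ (i : ℕ)),
            ‖∑ t, Qmat i t * s (⟨R - 1, by omega⟩, t)‖ := by
  intro s
  have hαK : α ≤ c (R - 2) := hαc.trans (hmono 0 (R - 2) (Nat.zero_le _) le_rfl)
  let rows := J2RowEquiv hR hmono hcL
  let cols := sumFinSubEquiv (Fin R × Fin Q) hαK hcL
  have hreindex : ‖((J2 L Q R α Qmat c s).submatrix e2 id).det‖ =
      ‖(((J2 L Q R α Qmat c s).submatrix rows cols).submatrix (Sum.map e4 id) id).det‖ :=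
    norm_det_submatrix_eq_of_equiv _ e2 (Equiv.refl _) ((e4.sumCongr (Equiv.refl _)).trans rows)
      cols
  rw [hreindex, ← fromBlocks_toBlocks ((J2 L Q R α Qmat c s).submatrix rows cols),
    J2_submatrix_toBlocks₁₁, J2_submatrix_toBlocks₁₂, J2_submatrix_toBlocks₂₂,
    det_submatrix_sumMap_fromBlocks_zero₁₂, norm_mul, det_diagonal, norm_prod,
    prod_filter_le_val_eq_prod_fin_sub]
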